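/- arXiv:1310.7530 — 5 statements merged into one kernel-verified Lean document; each statement's English description precedes it below -/
import Mathlib

section
/- Let R be a ring and let X and Y be ℤ-indexed chain complexes of R-modules. Then for every integer n there is an isomorphism of abelian groups H_n(Hom•(X,Y)) ≅ [X, Σ^{-n}Y], where [X, Σ^{-n}Y] denotes the abelian group of chain-homotopy classes of chain maps from X to Σ^{-n}Y. -/
open CategoryTheory

universe u

variable {R : Type u} [Ring R]

/-- Degree-`n` component of the Hom-complex: families of maps `X_k → Y_{k+n}`. -/
abbrev HomDeg (X Y : ChainComplex (ModuleCat.{u} R) ℤ) (n : ℤ) : Type u :=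
  ∀ k : ℤ, X.X k →ₗ[R] Y.X (k + n)

/-- The differential of the Hom-complex: `(δ f)_k = d ∘ f_k − (−1)^n f_{k−1} ∘ d`. -/
def homDegD (X Y : ChainComplex (ModuleCat.{u} R) ℤ) (n : ℤ) :
    HomDeg X Y n →+ HomDeg X Y (n - 1) :=
  AddMonoidHom.mk' (fun f k =>
    (Y.d (k + n) (k + (n - 1))).hom.comp (f k) -
      ((Int.negOnePow n : ℤˣ) : ℤ) •
        ((Y.XIsoOfEq (show (k - 1) + n = k + (n - 1) by ring)).hom.hom.comp
          ((f (k - 1)).comp (X.d k (k - 1)).hom)))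
    (by
      intro f g
      funext k
      simp only [Pi.add_apply, LinearMap.comp_add, LinearMap.add_comp, smul_add]
      abel)

/-- Cast between components of the Hom-complex in propositionally equal degrees. -/
def homDegCast (X Y : ChainComplex (ModuleCat.{u} R) ℤ) {m n : ℤ} (h : m = n) :
    HomDeg X Y m ≃+ HomDeg X Y n := by subst h; exact AddEquiv.refl _

/-- The cycles of the Hom-complex in degree `n`. -/
def homCycles (X Y : ChainComplex (ModuleCat.{u} R) ℤ) (n : ℤ) :
    AddSubgroup (HomDeg X Y n) :=
  (homDegD X Y n).ker

/-- The boundaries of the Hom-complex in degree `n`. -/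
def homBoundaries (X Y : ChainComplex (ModuleCat.{u} R) ℤ) (n : ℤ) :
    AddSubgroup (HomDeg X Y n) :=
  (((homDegCast X Y (show (n + 1) - 1 = n by ring)).toAddMonoidHom).comp
    (homDegD X Y (n + 1))).range

/-- The `m`-fold suspension `Σ^m Y`: `(Σ^m Y)_k = Y_{k−m}` with differential `(−1)^m d`. -/
def shiftComplex (Y : ChainComplex (ModuleCat.{u} R) ℤ) (m : ℤ) :
    ChainComplex (ModuleCat.{u} R) ℤ where
  X k := Y.X (k - m)
  d i j := ((Int.negOnePow m : ℤˣ) : ℤ) • Y.d (i - m) (j - m)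
  shape i j h := by
    rw [Y.shape, smul_zero]
    intro hh
    simp only [ComplexShape.down_Rel] at h hh
    omega
  d_comp_d' i j k _ _ := by
    simp [CategoryTheory.Preadditive.comp_zsmul, CategoryTheory.Preadditive.zsmul_comp]


/-- The `n`-th homology of the Hom-complex `Hom•(X,Y)`. -/
def homHomology (X Y : ChainComplex (ModuleCat.{u} R) ℤ) (n : ℤ) : Type u :=
  homCycles X Y n ⧸ (homBoundaries X Y n).addSubgroupOf (homCycles X Y n)

noncomputable instance (X Y : ChainComplex (ModuleCat.{u} R) ℤ) (n : ℤ) :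
    AddCommGroup (homHomology X Y n) :=
  inferInstanceAs (AddCommGroup
    (homCycles X Y n ⧸ (homBoundaries X Y n).addSubgroupOf (homCycles X Y n)))

/-- The subgroup of null-homotopic chain maps. -/
def nullHomotopic (X Z : ChainComplex (ModuleCat.{u} R) ℤ) : AddSubgroup (X ⟶ Z) where
  carrier := {f | Nonempty (Homotopy f 0)}
  zero_mem' := ⟨Homotopy.refl 0⟩
  add_mem' := by
    rintro f g ⟨h⟩ ⟨h'⟩
    have := h.add h'
    rw [add_zero] at this
    exact ⟨this⟩
  neg_mem' := by
    rintro f ⟨h⟩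
    have := Homotopy.equivSubZero h.symm
    rw [zero_sub] at this
    exact ⟨this⟩

/-- The abelian group of chain-homotopy classes of chain maps `X ⟶ Z`. -/
def HomotopyClasses (X Z : ChainComplex (ModuleCat.{u} R) ℤ) : Type u :=
  (X ⟶ Z) ⧸ nullHomotopic X Z

noncomputable instance (X Z : ChainComplex (ModuleCat.{u} R) ℤ) :
    AddCommGroup (HomotopyClasses X Z) :=
  inferInstanceAs (AddCommGroup ((X ⟶ Z) ⧸ nullHomotopic X Z))

/-!
After the reindexing `Y_{k+n} = (Σ^{-n} Y)_k`, a degree-`n` element `f` of `Hom•(X,Y)` is a family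
of maps `X_k ⟶ (Σ^{-n} Y)_k`, and `(-1)^n δf` is its failure to commute with the differentials,
the sign `(-1)^n` of `δ` matching the differential `(-1)^n d` of `Σ^{-n} Y`. So the cycles are
exactly the chain maps `X ⟶ Σ^{-n} Y`. Likewise `f = δh` says precisely that `(-1)^n h`, read as
maps `X_i ⟶ (Σ^{-n} Y)_{i+1}`, is a null-homotopy of `f`. The equivalence between cycles and chain
maps therefore carries boundaries onto null-homotopic maps and descends to the quotients.
-/

lemma negOnePow_smul_negOnePow_smul {M : Type*} [AddCommGroup M] (n : ℤ) (x : M) :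
    (n.negOnePow : ℤ) • (n.negOnePow : ℤ) • x = x := by
  rw [smul_smul, Int.units_coe_mul_self, one_smul]

lemma negOnePow_smul_eq_zero_iff {M : Type*} [AddCommGroup M] (n : ℤ) {x : M} :
    (n.negOnePow : ℤ) • x = 0 ↔ x = 0 :=
  ⟨fun h => by rw [← negOnePow_smul_negOnePow_smul n x, h, smul_zero],
    fun h => by rw [h, smul_zero]⟩

section

variable (X Y : ChainComplex (ModuleCat.{u} R) ℤ) (n : ℤ)

lemma shiftComplex_d (m i j : ℤ) :
    (shiftComplex Y m).d i j = (m.negOnePow : ℤ) • Y.d (i - m) (j - m) := rfl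

def shiftNegXIso (k : ℤ) : Y.X (k + n) ≅ (shiftComplex Y (-n)).X k :=
  Y.XIsoOfEq (by omega)

def homDegEquiv : HomDeg X Y n ≃+ ∀ k, X.X k ⟶ (shiftComplex Y (-n)).X k where
  toFun f k := ModuleCat.ofHom (f k) ≫ (shiftNegXIso Y n k).hom
  invFun g k := (g k ≫ (shiftNegXIso Y n k).inv).hom
  left_inv f := by funext k; simp
  right_inv g := by funext k; simp
  map_add' f g := by funext k; simp

lemma homDegEquiv_apply (f : HomDeg X Y n) (k : ℤ) :
    homDegEquiv X Y n f k = ModuleCat.ofHom (f k) ≫ (shiftNegXIso Y n k).hom := rfl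

lemma ofHom_homDegD (m : ℤ) (h : HomDeg X Y m) (k : ℤ) :
    ModuleCat.ofHom (homDegD X Y m h k) =
      ModuleCat.ofHom (h k) ≫ Y.d (k + m) (k + (m - 1)) -
        (m.negOnePow : ℤ) • (X.d k (k - 1) ≫ ModuleCat.ofHom (h (k - 1)) ≫
          (Y.XIsoOfEq (show k - 1 + m = k + (m - 1) by ring)).hom) := rfl

lemma shiftNegXIso_hom_comp_d (i j : ℤ) :
    (shiftNegXIso Y n i).hom ≫ (shiftComplex Y (-n)).d i j =
      (n.negOnePow : ℤ) • (Y.d (i + n) (j + n) ≫ (shiftNegXIso Y n j).hom) := by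
  rw [shiftComplex_d, Int.negOnePow_neg]
  exact (Preadditive.comp_zsmul _ _ _).trans
    (congrArg _ ((Y.XIsoOfEq_hom_comp_d _ _).trans (Y.d_comp_XIsoOfEq_hom _ _).symm))

lemma homDegD_comp_shiftNegXIso_hom (f : HomDeg X Y n) (k : ℤ) :
    ModuleCat.ofHom (homDegD X Y n f k) ≫
        (Y.XIsoOfEq (show k + (n - 1) = k - 1 + n by ring)).hom ≫ (shiftNegXIso Y n (k - 1)).hom =
      (n.negOnePow : ℤ) • (homDegEquiv X Y n f k ≫ (shiftComplex Y (-n)).d k (k - 1) -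
        X.d k (k - 1) ≫ homDegEquiv X Y n f (k - 1)) := by
  simp [homDegEquiv_apply, shiftNegXIso_hom_comp_d, ofHom_homDegD, Preadditive.sub_comp, smul_sub,
    negOnePow_smul_negOnePow_smul]

lemma mem_homCycles_iff (f : HomDeg X Y n) :
    f ∈ homCycles X Y n ↔ ∀ k, homDegEquiv X Y n f k ≫ (shiftComplex Y (-n)).d k (k - 1) =
      X.d k (k - 1) ≫ homDegEquiv X Y n f (k - 1) := by
  refine funext_iff.trans (forall_congr' fun k => ?_)
  rw [← sub_eq_zero (a := homDegEquiv X Y n f k ≫ _), ← negOnePow_smul_eq_zero_iff n,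
    ← homDegD_comp_shiftNegXIso_hom, Preadditive.IsIso.comp_right_eq_zero]
  exact ModuleCat.hom_ext_iff.symm

def homCyclesEquiv : homCycles X Y n ≃+ (X ⟶ shiftComplex Y (-n)) where
  toFun f :=
    { f := homDegEquiv X Y n f
      comm' i j hij := by
        obtain rfl : j = i - 1 := by simp at hij; omega
        exact (mem_homCycles_iff X Y n f).1 f.2 i }
  invFun g := ⟨(homDegEquiv X Y n).symm g.f,
    (mem_homCycles_iff X Y n _).2 fun k => by simp⟩
  left_inv f := Subtype.ext ((homDegEquiv X Y n).symm_apply_apply f)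
  right_inv g := HomologicalComplex.hom_ext _ _ fun k =>
    congrFun ((homDegEquiv X Y n).apply_symm_apply g.f) k
  map_add' f g := HomologicalComplex.hom_ext _ _ fun k =>
    congrFun ((homDegEquiv X Y n).map_add f g) k

lemma homCyclesEquiv_f (f : homCycles X Y n) (k : ℤ) :
    (homCyclesEquiv X Y n f).f k = homDegEquiv X Y n f k := rfl

def homotopyHom (h : HomDeg X Y (n + 1)) (i j : ℤ) : X.X i ⟶ (shiftComplex Y (-n)).X j :=
  if hij : i + 1 = j then
    (n.negOnePow : ℤ) • (ModuleCat.ofHom (h i) ≫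
      (Y.XIsoOfEq (show i + (n + 1) = j + n by omega)).hom ≫ (shiftNegXIso Y n j).hom)
  else 0

lemma homotopyHom_of_eq (h : HomDeg X Y (n + 1)) {i j : ℤ} (hij : i + 1 = j) :
    homotopyHom X Y n h i j = (n.negOnePow : ℤ) • (ModuleCat.ofHom (h i) ≫
      (Y.XIsoOfEq (show i + (n + 1) = j + n by omega)).hom ≫ (shiftNegXIso Y n j).hom) :=
  dif_pos hij

lemma ofHom_homDegCast {m m' : ℤ} (hm : m = m') (f : HomDeg X Y m) (k : ℤ) :
    ModuleCat.ofHom (homDegCast X Y hm f k) =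
      ModuleCat.ofHom (f k) ≫ (Y.XIsoOfEq (by rw [hm])).hom := by
  subst hm
  simp [homDegCast]

lemma homDegEquiv_homDegCast_homDegD (h : HomDeg X Y (n + 1)) (i : ℤ) :
    homDegEquiv X Y n (homDegCast X Y (by ring) (homDegD X Y (n + 1) h)) i =
      dNext i (homotopyHom X Y n h) + prevD i (homotopyHom X Y n h) := by
  rw [dNext_eq _ (show (ComplexShape.down ℤ).Rel i (i - 1) by simp),
    prevD_eq _ (show (ComplexShape.down ℤ).Rel (i + 1) i by simp),
    homotopyHom_of_eq X Y n h (sub_add_cancel i 1), homotopyHom_of_eq X Y n h rfl]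
  simp [homDegEquiv_apply, ofHom_homDegCast, ofHom_homDegD, shiftNegXIso_hom_comp_d,
    negOnePow_smul_negOnePow_smul, Int.negOnePow_succ]
  abel

lemma exists_homotopyHom_eq (H : ∀ i j, X.X i ⟶ (shiftComplex Y (-n)).X j)
    (hH : ∀ i j, ¬ (ComplexShape.down ℤ).Rel j i → H i j = 0) :
    ∃ h, homotopyHom X Y n h = H := by
  refine ⟨fun k => ((n.negOnePow : ℤ) • (H k (k + 1) ≫ (shiftNegXIso Y n (k + 1)).inv ≫
    (Y.XIsoOfEq (show k + 1 + n = k + (n + 1) by ring)).hom)).hom, ?_⟩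
  funext i j
  by_cases hij : i + 1 = j
  · subst hij
    rw [homotopyHom_of_eq X Y n _ rfl, ModuleCat.ofHom_hom]
    simp [negOnePow_smul_negOnePow_smul]
  · rw [homotopyHom, dif_neg hij, hH i j (by simpa using hij)]

lemma homCyclesEquiv_mem_nullHomotopic_iff (f : homCycles X Y n) :
    homCyclesEquiv X Y n f ∈ nullHomotopic X (shiftComplex Y (-n)) ↔
      (f : HomDeg X Y n) ∈ homBoundaries X Y n := by
  constructor
  · rintro ⟨H⟩
    obtain ⟨h, hH⟩ := exists_homotopyHom_eq X Y n H.hom H.zero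
    refine ⟨h, (homDegEquiv X Y n).injective (funext fun i => ?_)⟩
    rw [AddMonoidHom.comp_apply, AddEquiv.coe_toAddMonoidHom, homDegEquiv_homDegCast_homDegD, hH,
      ← homCyclesEquiv_f, H.comm i, HomologicalComplex.zero_f, add_zero]
  · rintro ⟨h, hf⟩
    exact ⟨{
      hom := homotopyHom X Y n h
      zero := fun i j hij => dif_neg (by simpa using hij)
      comm := fun i => by
        rw [homCyclesEquiv_f, ← hf, HomologicalComplex.zero_f, add_zero]
        exact homDegEquiv_homDegCast_homDegD X Y n h i }⟩

lemma map_homBoundaries_eq_nullHomotopic :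
    ((homBoundaries X Y n).addSubgroupOf (homCycles X Y n)).map
        (homCyclesEquiv X Y n).toAddMonoidHom = nullHomotopic X (shiftComplex Y (-n)) := by
  ext g
  rw [AddSubgroup.mem_map_equiv, AddSubgroup.mem_addSubgroupOf,
    ← homCyclesEquiv_mem_nullHomotopic_iff, AddEquiv.apply_symm_apply]

end

/-- For every integer `n`, the `n`-th homology of the Hom-complex `Hom•(X,Y)` is isomorphic,
as an abelian group, to the group of chain-homotopy classes of chain maps `X ⟶ Σ^{-n} Y`. -/
theorem homComplex_homology_iso_homotopyClasses
    (X Y : ChainComplex (ModuleCat.{u} R) ℤ) (n : ℤ) :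
    Nonempty (homHomology X Y n ≃+ HomotopyClasses X (shiftComplex Y (-n))) :=
  ⟨QuotientAddGroup.congr _ _ (homCyclesEquiv X Y n) (map_homBoundaries_eq_nullHomotopic X Y n)⟩
end

section
/- Let A be an abelian category with enough projectives. Then the category of ℤ-indexed chain complexes over A has enough projectives, and a chain complex P is a projective object of this category if and only if P is contractible and each component P_n is a projective object of A. -/
/-!
For `Q : ℤ → A`, the sum of disks on `Q` is a contractible complex whose chain maps to any `C`
correspond to families `Q n ⟶ C.X n`; hence it is projective when every `Q n` is, and covering
each `C.X n` by a projective gives enough projectives. A projective complex is a retract of such a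
sum of disks, so it is contractible with projective components. Conversely, a contraction of `P`
splits the canonical epimorphism from the sum of disks on the `P.X n` onto `P`, so a contractible
`P` with projective components is a retract of a projective complex.
-/

open CategoryTheory Limits

namespace CategoryTheory

variable {C : Type*} [Category* C]

noncomputable def Retract.ofEpiOfProjective {P Y : C} [Projective P] (e : Y ⟶ P) [Epi e] :
    Retract P Y where
  i := Projective.factorThru (𝟙 P) e
  r := e

variable {ι : Type*} {c : ComplexShape ι}

lemma Retract.projective_X [HasZeroMorphisms C] {X Y : HomologicalComplex C c} (h : Retract X Y)
    (i : ι) [Projective (Y.X i)] : Projective (X.X i) :=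
  (h.map (HomologicalComplex.eval C c i)).projective (p := ‹Projective (Y.X i)›)

variable [Preadditive C]

noncomputable def Retract.homotopyIdZero {X Y : HomologicalComplex C c} (h : Retract X Y)
    (H : Homotopy (𝟙 Y) 0) : Homotopy (𝟙 X) 0 :=
  (Homotopy.ofEq (by simp)).trans (((H.compLeft h.i).compRight h.r).trans (Homotopy.ofEq (by simp)))

end CategoryTheory

namespace ChainComplex

variable {A : Type*} [Category* A] [Preadditive A]

lemma id_X_eq_of_homotopy {K : ChainComplex A ℤ} (H : Homotopy (𝟙 K) 0) (n : ℤ) :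
    𝟙 (K.X (n + 1)) =
      K.d (n + 1) n ≫ H.hom n (n + 1) +
        H.hom (n + 1) (n + 1 + 1) ≫ K.d (n + 1 + 1) (n + 1) := by
  simpa [dNext_eq _ (show (ComplexShape.down ℤ).Rel (n + 1) n from rfl),
    prevD_eq _ (show (ComplexShape.down ℤ).Rel (n + 1 + 1) (n + 1) from rfl)] using H.comm (n + 1)

variable [HasBinaryBiproducts A]

/-- The direct sum over `n` of the disks `Q (n + 1) = Q (n + 1)` in degrees `n + 1` and `n`:
its degree `n` part is `Q n ⊞ Q (n + 1)`. -/
noncomputable abbrev disks (Q : ℤ → A) : ChainComplex A ℤ :=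
  ChainComplex.of (fun n => Q n ⊞ Q (n + 1)) (fun _ => biprod.fst ≫ biprod.inr)
    (fun _ => by simp)

variable (Q : ℤ → A)

lemma disks_d (n : ℤ) :
    (disks Q).d (n + 1) n = (biprod.fst ≫ biprod.inr : Q (n + 1) ⊞ Q (n + 1 + 1) ⟶ _) :=
  ChainComplex.of_d (fun n => Q n ⊞ Q (n + 1)) (fun _ => biprod.fst ≫ biprod.inr) n

lemma inl_disks_d (n : ℤ) :
    (biprod.inl : Q (n + 1) ⟶ (disks Q).X (n + 1)) ≫ (disks Q).d (n + 1) n = biprod.inr := by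
  simp

namespace disks

variable {Q} {K L : ChainComplex A ℤ}

noncomputable def desc (p : ∀ n, Q n ⟶ K.X n) : disks Q ⟶ K where
  f n := biprod.desc (p n) (p (n + 1) ≫ K.d (n + 1) n)
  comm' i j hij := by
    obtain rfl : j + 1 = i := hij
    rw [disks_d]
    apply biprod.hom_ext' <;> simp

@[simp]
lemma inl_desc_f (p : ∀ n, Q n ⟶ K.X n) (n : ℤ) : biprod.inl ≫ (desc p).f n = p n :=
  biprod.inl_desc _ _

lemma hom_ext {f g : disks Q ⟶ K} (h : ∀ n, biprod.inl ≫ f.f n = biprod.inl ≫ g.f n) :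
    f = g := by
  ext n : 1
  refine biprod.hom_ext' _ _ (h n) ?_
  rw [← inl_disks_d, Category.assoc, Category.assoc, ← f.comm, ← g.comm,
    reassoc_of% (h (n + 1))]

lemma desc_comp (p : ∀ n, Q n ⟶ K.X n) (φ : K ⟶ L) :
    desc p ≫ φ = desc (fun n => p n ≫ φ.f n) := by
  apply hom_ext
  intro n
  rw [HomologicalComplex.comp_f, ← Category.assoc, inl_desc_f, inl_desc_f]

instance epi_desc (p : ∀ n, Q n ⟶ K.X n) [∀ n, Epi (p n)] : Epi (desc p) :=
  HomologicalComplex.epi_of_epi_f _ fun n => epi_of_epi_fac (inl_desc_f p n)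

instance projective_X [∀ n, Projective (Q n)] (n : ℤ) : Projective ((disks Q).X n) :=
  inferInstanceAs (Projective (Q n ⊞ Q (n + 1)))

instance projective [HasFiniteColimits A] [∀ n, Projective (Q n)] : Projective (disks Q) where
  factors f e _ := by
    refine ⟨desc fun n => Projective.factorThru (biprod.inl ≫ f.f n) (e.f n), ?_⟩
    apply hom_ext
    simp [desc_comp]

noncomputable def homotopyIdZero (Q : ℤ → A) : Homotopy (𝟙 (disks Q)) 0 where
  hom i j :=
    if h : j = i + 1 then
      (biprod.snd ≫ biprod.inl : Q i ⊞ Q (i + 1) ⟶ Q (i + 1) ⊞ Q (i + 1 + 1)) ≫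
        eqToHom (congrArg (disks Q).X h.symm)
    else 0
  zero i j h := dif_neg fun hj => h (by simp [hj])
  comm i := by
    obtain ⟨j, rfl⟩ : ∃ j, j + 1 = i := ⟨i - 1, by ring⟩
    rw [dNext_eq _ (show (ComplexShape.down ℤ).Rel (j + 1) j from rfl),
      prevD_eq _ (show (ComplexShape.down ℤ).Rel (j + 1 + 1) (j + 1) from rfl),
      dif_pos rfl, dif_pos rfl, disks_d, disks_d]
    apply biprod.hom_ext' <;> apply biprod.hom_ext <;>
      simp [show 𝟙 ((disks Q).X (j + 1)) = 𝟙 (Q (j + 1) ⊞ Q (j + 1 + 1)) from rfl]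

/-- In degree `n`, `desc 𝟙` is `(a, b) ↦ a + d b`, so `(1 - h d, h)` is a section of it; it is a
chain map because `d h + h d = 1`. -/
noncomputable def retractOfHomotopy (H : Homotopy (𝟙 K) 0) : Retract K (disks K.X) where
  i :=
    { f n := biprod.lift (𝟙 (K.X n) - H.hom n (n + 1) ≫ K.d (n + 1) n) (H.hom n (n + 1))
      comm' i j hij := by
        obtain rfl : j + 1 = i := hij
        have hd : K.d (j + 1) j ≫ H.hom j (j + 1) ≫ K.d (j + 1) j = K.d (j + 1) j := by
          conv_rhs => rw [← Category.id_comp (K.d (j + 1) j), id_X_eq_of_homotopy H]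
          simp
        have hs : 𝟙 (K.X (j + 1)) - H.hom (j + 1) (j + 1 + 1) ≫ K.d (j + 1 + 1) (j + 1) =
            K.d (j + 1) j ≫ H.hom j (j + 1) := by
          rw [id_X_eq_of_homotopy H]
          abel
        rw [disks_d]
        apply biprod.hom_ext
        · simp [Preadditive.comp_sub, Preadditive.sub_comp, hd]
        · simp [hs] }
  r := desc fun _ => 𝟙 _
  retract := by
    ext n
    simp [desc]

end disks

end ChainComplex

/-- If an abelian category `A` has enough projectives, then so does the category of
`ℤ`-indexed chain complexes over `A`, and a complex is a projective object if and only if it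
is contractible with projective components. -/
theorem enoughProjectives_chainComplex_and_projective_iff
    {A : Type u} [Category.{v} A] [Abelian A] [EnoughProjectives A] :
    EnoughProjectives (ChainComplex A ℤ) ∧
      ∀ (P : ChainComplex A ℤ),
        Projective P ↔ (Nonempty (Homotopy (𝟙 P) 0) ∧ ∀ n : ℤ, Projective (P.X n)) := by
  refine ⟨⟨fun C => ⟨⟨ChainComplex.disks _,
    ChainComplex.disks.desc fun n => Projective.π (C.X n)⟩⟩⟩, fun P => ⟨?_, ?_⟩⟩
  · intro _
    let h := Retract.ofEpiOfProjective (ChainComplex.disks.desc fun n => Projective.π (P.X n))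
    exact ⟨⟨h.homotopyIdZero (ChainComplex.disks.homotopyIdZero _)⟩,
      fun n => h.projective_X n⟩
  · rintro ⟨⟨H⟩, _⟩
    exact (ChainComplex.disks.retractOfHomotopy H).projective
end

section
/- Let A be an abelian category and let X be a ℤ-indexed chain complex over A. Then X is contractible if and only if X is acyclic and for every integer n the canonical monomorphism from the object of n-cycles Z_n(X) into X_n is a split monomorphism. -/
open CategoryTheory CategoryTheory.Limits

/-- A `ℤ`-indexed chain complex over an abelian category is contractible if and only if it is
acyclic and, for every `n`, the canonical monomorphism `Z_n(X) ⟶ X_n` from the object of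
`n`-cycles is a split monomorphism. -/
theorem contractible_iff_acyclic_and_cycles_split
    {A : Type u} [Category.{v} A] [Abelian A] (X : ChainComplex A ℤ) :
    Nonempty (Homotopy (𝟙 X) 0) ↔
      ((∀ n : ℤ, X.ExactAt n) ∧ ∀ n : ℤ, IsSplitMono (X.iCycles n)) := by
  constructor
  · rintro ⟨ho⟩
    constructor
    · intro n
      rw [HomologicalComplex.exactAt_iff_isZero_homology, IsZero.iff_id_eq_zero]
      calc 𝟙 (X.homology n) = HomologicalComplex.homologyMap (𝟙 X) n := by
            rw [HomologicalComplex.homologyMap_id]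
        _ = HomologicalComplex.homologyMap (0 : X ⟶ X) n := ho.homologyMap_eq n
        _ = 0 := HomologicalComplex.homologyMap_zero X X n
    · intro n
      have hrel1 : (ComplexShape.down ℤ).Rel (n + 1) n := ComplexShape.down_mk _ _ rfl
      have hrel0 : (ComplexShape.down ℤ).Rel n (n - 1) := ComplexShape.down_mk _ _ (by omega)
      refine ⟨⟨⟨X.liftCycles (ho.hom n (n + 1) ≫ X.d (n + 1) n) (n - 1)
        ((ComplexShape.down ℤ).next_eq' hrel0) (by simp), ?_⟩⟩⟩
      have hc := ho.comm n
      rw [dNext_eq ho.hom hrel0, prevD_eq ho.hom hrel1] at hc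
      rw [← cancel_mono (X.iCycles n)]
      simp only [Category.assoc, HomologicalComplex.liftCycles_i, Category.id_comp]
      have : ho.hom n (n + 1) ≫ X.d (n + 1) n
          = 𝟙 (X.X n) - X.d n (n - 1) ≫ ho.hom (n - 1) n := by
        simp only [HomologicalComplex.id_f, HomologicalComplex.zero_f_apply, add_zero] at hc
        rw [hc]; abel
      rw [this]
      simp
  · rintro ⟨hex, hsplit⟩
    -- retraction of iCycles
    set r : ∀ n : ℤ, X.X n ⟶ X.cycles n := fun n => retraction (X.iCycles n) with hr_def
    have hr : ∀ n : ℤ, X.iCycles n ≫ r n = 𝟙 _ := fun n => IsSplitMono.id _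
    -- toCycles is epi by exactness
    have hepi : ∀ j i : ℤ, (ComplexShape.down ℤ).Rel j i → Epi (X.toCycles j i) := by
      intro j i hij
      have h : (ComplexShape.down ℤ).prev i = j := (ComplexShape.down ℤ).prev_eq' hij
      subst h
      exact (hex i).epi_toCycles
    -- i ≫ toCycles = 0
    have hip : ∀ j i : ℤ, X.iCycles j ≫ X.toCycles j i = 0 := by
      intro j i
      rw [← cancel_mono (X.iCycles i), Category.assoc, HomologicalComplex.toCycles_i,
        zero_comp, HomologicalComplex.iCycles_d]
    -- construct the section data
    have hs : ∀ j i : ℤ, (ComplexShape.down ℤ).Rel j i →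
        ∃ s : X.cycles i ⟶ X.X j, X.toCycles j i ≫ s = 𝟙 (X.X j) - r j ≫ X.iCycles j := by
      intro j i hij
      have := hepi j i hij
      have hker : kernel.ι (X.toCycles j i) ≫ (𝟙 (X.X j) - r j ≫ X.iCycles j) = 0 := by
        have hkd : kernel.ι (X.toCycles j i) ≫ X.d j i = 0 := by
          rw [← X.toCycles_i j i, ← Category.assoc, kernel.condition, zero_comp]
        set ℓ := X.liftCycles (kernel.ι (X.toCycles j i)) i
          ((ComplexShape.down ℤ).next_eq' hij) hkd with hℓ
        have hℓi : ℓ ≫ X.iCycles j = kernel.ι (X.toCycles j i) :=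
          X.liftCycles_i _ _ _ _
        rw [← hℓi]
        simp only [Preadditive.comp_sub, Category.comp_id, Category.assoc]
        rw [← Category.assoc (X.iCycles j), hr, Category.id_comp, sub_self]
      exact ⟨Abelian.epiDesc _ _ hker, Abelian.comp_epiDesc _ _ hker⟩
    choose s hs using hs
    -- s is also a section of toCycles
    have hsp : ∀ j i : ℤ, (hij : (ComplexShape.down ℤ).Rel j i) →
        s j i hij ≫ X.toCycles j i = 𝟙 (X.cycles i) := by
      intro j i hij
      have := hepi j i hij
      rw [← cancel_epi (X.toCycles j i), ← Category.assoc, hs j i hij]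
      simp only [Preadditive.sub_comp, Category.id_comp, Category.comp_id, Category.assoc,
        hip, comp_zero, sub_zero]
    -- the null homotopic map equal to the identity
    refine ⟨(Homotopy.ofEq ?_).trans (Homotopy.nullHomotopy' fun i j hij => r i ≫ s j i hij)⟩
    ext n
    have hrel1 : (ComplexShape.down ℤ).Rel (n + 1) n := ComplexShape.down_mk _ _ rfl
    have hrel0 : (ComplexShape.down ℤ).Rel n (n - 1) := ComplexShape.down_mk _ _ (by omega)
    rw [Homotopy.nullHomotopicMap'_f hrel1 hrel0]
    have e1 : X.d n (n - 1) ≫ r (n - 1) ≫ s n (n - 1) hrel0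
        = 𝟙 (X.X n) - r n ≫ X.iCycles n := by
      rw [← X.toCycles_i n (n - 1)]
      rw [Category.assoc, ← Category.assoc (X.iCycles (n - 1)), hr, Category.id_comp,
        hs n (n - 1) hrel0]
    have e2 : (r n ≫ s (n + 1) n hrel1) ≫ X.d (n + 1) n = r n ≫ X.iCycles n := by
      rw [← X.toCycles_i (n + 1) n]
      slice_lhs 2 3 => rw [hsp (n + 1) n hrel1]
      simp
    rw [HomologicalComplex.id_f, e2]
    rw [show X.d n (n - 1) ≫ (r (n - 1) ≫ s n (n - 1) hrel0) = 𝟙 (X.X n) - r n ≫ X.iCycles n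
      from e1]
    abel
end

section
/- Let R be a ring and let F be a flat R-module. Then F is cotorsion if and only if every short exact sequence of R-modules 0 → F → G → H → 0 with G and H flat splits. -/
/-!
A cotorsion module splits in particular the sequences whose middle term is flat. Conversely,
in `0 → F → M → Q → 0` with `F` and `Q` flat the middle term `M` is flat as well, because flat
modules are closed under extensions, so the weaker splitting property already suffices.
-/

universe u

/-- An `R`-module `C` is cotorsion if every short exact sequence `0 → C → M → F → 0`
with `F` flat splits. -/
def IsCotorsion (R : Type u) [CommRing R] (C : Type u) [AddCommGroup C] [Module R C] : Prop :=
  ∀ (M F : Type u) [AddCommGroup M] [Module R M] [AddCommGroup F] [Module R F],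
    Module.Flat R F →
      ∀ (i : C →ₗ[R] M) (p : M →ₗ[R] F),
        Function.Injective i → Function.Surjective p → Function.Exact i p →
          ∃ r : M →ₗ[R] C, r ∘ₗ i = LinearMap.id

open LinearMap in
theorem Module.Flat.of_exact {R M N P : Type*} [CommRing R]
    [AddCommGroup M] [Module R M] [AddCommGroup N] [Module R N]
    [AddCommGroup P] [Module R P] [Module.Flat R M] [Module.Flat R P]
    {f : M →ₗ[R] N} {g : N →ₗ[R] P} (hf : Function.Injective f) (hg : Function.Surjective g)
    (hfg : Function.Exact f g) : Module.Flat R N := by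
  refine Module.Flat.iff_rTensor_injective'.2 fun I ↦ ?_
  -- The four lemma, applied to the map from `I ⊗ (0 → M → N → P)` to `R ⊗ (0 → M → N → P)`;
  -- exactness of the top row at `I ⊗ M` is `Tor₁(I, P) = 0`.
  refine injective_of_surjective_of_injective_of_injective (0 : Unit →ₗ[R] _) (f.lTensor I)
    (g.lTensor I) (0 : Unit →ₗ[R] _) (f.lTensor R) (g.lTensor R) 0 (I.subtype.rTensor M)
    (I.subtype.rTensor N) (I.subtype.rTensor P) (by simp) ?_ ?_ ?_
    (_root_.lTensor_exact I hfg hg) ?_ (Function.surjective_to_subsingleton _)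
    (Module.Flat.iff_rTensor_injective'.1 ‹_› I) (Module.Flat.iff_rTensor_injective'.1 ‹_› I)
  · rw [rTensor_comp_lTensor, lTensor_comp_rTensor]
  · rw [rTensor_comp_lTensor, lTensor_comp_rTensor]
  · exact (exact_zero_iff_injective _ _).2 (lTensor_injective_of_exact_of_flat g hg f hf hfg I)
  · exact (exact_zero_iff_injective _ _).2 (Module.Flat.lTensor_preserves_injective_linearMap f hf)

/-- A flat `R`-module `F` is cotorsion if and only if every short exact sequence
`0 → F → G → H → 0` with `G` and `H` flat splits. -/
theorem flat_cotorsion_iff_ses_into_flat_splits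
    (R : Type u) [CommRing R] (F : Type u) [AddCommGroup F] [Module R F]
    (hF : Module.Flat R F) :
    IsCotorsion R F ↔
      ∀ (G H : Type u) [AddCommGroup G] [Module R G] [AddCommGroup H] [Module R H],
        Module.Flat R G → Module.Flat R H →
          ∀ (i : F →ₗ[R] G) (p : G →ₗ[R] H),
            Function.Injective i → Function.Surjective p → Function.Exact i p →
              ∃ r : G →ₗ[R] F, r ∘ₗ i = LinearMap.id := by
  refine ⟨fun hcot G H _ _ _ _ _ hH ↦ hcot G H hH, fun hsplit M Q _ _ _ _ hQ i p hi hp hip ↦ ?_⟩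
  have hM : Module.Flat R M := Module.Flat.of_exact hi hp hip
  exact hsplit M Q hM hQ i p hi hp hip
end

section
/- Let A be an abelian category with enough injectives and let (W, F) be a complete cotorsion pair in A such that W is thick. Then W ∩ F equals the class of injective objects of A if and only if W contains all injective objects of A. -/
open CategoryTheory CategoryTheory.Limits

universe v u

variable {A : Type u} [Category.{v} A] [Abelian A]

/-- Every short exact sequence `0 → Y → E → X → 0` splits. -/
def ExtVanishes (X Y : A) : Prop :=
  ∀ (E : A) (i : Y ⟶ E) (p : E ⟶ X) (w : i ≫ p = 0),
    (ShortComplex.mk i p w).ShortExact → ∃ s : X ⟶ E, s ≫ p = 𝟙 X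

/-- `(W, F)` is a cotorsion pair: `W` consists exactly of the objects `X` such that every
short exact sequence `0 → F → E → X → 0` with `F ∈ F` splits, and `F` consists exactly of
the objects `Y` such that every short exact sequence `0 → Y → E → W → 0` with `W ∈ W`
splits. -/
def IsCotorsionPair (W F : A → Prop) : Prop :=
  (∀ X : A, W X ↔ ∀ Y : A, F Y → ExtVanishes X Y) ∧
    (∀ Y : A, F Y ↔ ∀ X : A, W X → ExtVanishes X Y)

/-- The cotorsion pair `(W, F)` is complete: every object `X` admits short exact sequences
`0 → F → W → X → 0` and `0 → X → F′ → W′ → 0` with `W, W′ ∈ W` and `F, F′ ∈ F`. -/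
def IsCompleteCotorsionPair (W F : A → Prop) : Prop :=
  IsCotorsionPair W F ∧
    (∀ X : A, ∃ (F₀ W₀ : A) (i : F₀ ⟶ W₀) (p : W₀ ⟶ X) (w : i ≫ p = 0),
      F F₀ ∧ W W₀ ∧ (ShortComplex.mk i p w).ShortExact) ∧
    (∀ X : A, ∃ (F₀ W₀ : A) (i : X ⟶ F₀) (p : F₀ ⟶ W₀) (w : i ≫ p = 0),
      F F₀ ∧ W W₀ ∧ (ShortComplex.mk i p w).ShortExact)

/-- A class of objects is thick if it is closed under direct summands (retracts) and
satisfies the two-out-of-three property for short exact sequences. -/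
def IsThickClass (W : A → Prop) : Prop :=
  (∀ X Y : A, W X → (∃ (s : Y ⟶ X) (r : X ⟶ Y), s ≫ r = 𝟙 Y) → W Y) ∧
    (∀ (S : ShortComplex A), S.ShortExact →
      ((W S.X₁ → W S.X₂ → W S.X₃) ∧ (W S.X₁ → W S.X₃ → W S.X₂) ∧
        (W S.X₂ → W S.X₃ → W S.X₁)))

/-- For a complete cotorsion pair `(W, F)` with `W` thick in an abelian category with enough
injectives, `W ∩ F` is the class of injective objects if and only if `W` contains all
injective objects. -/
theorem injective_cotorsion_pair_characterization
    [EnoughInjectives A] (W F : A → Prop)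
    (hcp : IsCompleteCotorsionPair W F) (hthick : IsThickClass W) :
    (∀ X : A, (W X ∧ F X) ↔ Injective X) ↔ (∀ X : A, Injective X → W X) := by
  constructor
  · intro h X hX
    exact ((h X).mpr hX).1
  · intro hW X
    constructor
    · rintro ⟨hWX, hFX⟩
      -- embed X into an injective
      let I := Injective.under X
      let ι : X ⟶ I := Injective.ι X
      let S : ShortComplex A := ShortComplex.mk ι (cokernel.π ι) (cokernel.condition ι)
      have hS : S.ShortExact :=
        { exact := S.exact_of_g_is_cokernel (cokernelIsCokernel ι)
          mono_f := inferInstanceAs (Mono ι)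
          epi_g := inferInstanceAs (Epi (cokernel.π ι)) }
      have hQ : W (cokernel ι) :=
        ((hthick.2 S hS).1) hWX (hW I inferInstance)
      obtain ⟨s, hs⟩ := (hcp.1.2 X).mp hFX (cokernel ι) hQ I ι (cokernel.π ι)
        (cokernel.condition ι) hS
      have := hS.mono_f
      let sp := ShortComplex.Splitting.ofExactOfSection S hS.exact s hs hS.mono_f
      have hr : ι ≫ sp.r = 𝟙 X := sp.f_r
      constructor
      intro Y Z g f hf
      exact ⟨Injective.factorThru (g ≫ ι) f ≫ sp.r, by
        rw [← Category.assoc, Injective.comp_factorThru, Category.assoc, hr,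
          Category.comp_id]⟩
    · intro hinj
      refine ⟨hW X hinj, (hcp.1.2 X).mpr ?_⟩
      intro W₀ _ E i p w hse
      have sp := hse.splittingOfInjective
      exact ⟨sp.s, sp.s_g⟩
end
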